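/- Under the hypotheses of the previous statement (type D: Σ_{j=0}^r b_j ϖ_j = Σ_{i=1}^r a_i α̂_i with integer coefficients), the total coefficient sum satisfies Σ_{i=1}^r a_i = −Σ_{k=0}^r ((r−k)(r−k−1)/2)·b_k = Σ_{k=1}^{r−2} k(r − (k+1)/2) b_k + (r(r−1)/4)(b_{r−1}+b_r). -/

import Mathlib

/-- The extended fundamental coweights `ϖ_i` of type `D_r` (coordinate `k` ↔ `ε_{k+1}`). -/
def varpiD (r i : ℕ) : Fin (r + 1) → ℤ := fun k =>
  if i = r - 1 then (if (k : ℕ) = r - 1 then -1 else 0)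
  else if i = r then (if (k : ℕ) = r then -1 else 0)
  else if i ≤ (k : ℕ) then -1 else 0

/-- The lifted simple coroots `α̂_i` of type `D_r` (coordinate `k` ↔ `ε_{k+1}`). -/
def hatD (r i : ℕ) : Fin (r + 1) → ℤ := fun k =>
  if i = r - 1 then
    (if (k : ℕ) = r - 2 then 1 else if (k : ℕ) = r - 1 then -1 else
      if (k : ℕ) = r then 1 else 0)
  else if i = r then
    (if (k : ℕ) = r - 2 then 1 else if (k : ℕ) = r - 1 then 1 else
      if (k : ℕ) = r then -1 else 0)
  else (if (k : ℕ) = i - 1 then 1 else if (k : ℕ) = i then -1 else 0)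

/-
Pair both sides of `∑ b_j ϖ_j = ∑ a_i α̂_i` with two integer covectors. The height covector
`(r - 1, r - 2, …, 1, 0, 0)` pairs to `1` with every `α̂_i` and to `-(r - j)(r - j - 1)/2` with
`ϖ_j` (a Gauss sum), which is the first identity. The sum of the last two coordinates kills
every `α̂_i` and gives the constraint `2 ∑_{j ≤ r-2} b_j + b_{r-1} + b_r = 0`; substituting it
into the first identity through `-2(r - k)(r - k - 1) = 2k(2r - k - 1) - 2r(r - 1)` gives the
second.
-/

open Finset Matrix

lemma sum_Ico_pred_sub_mul_two (j n : ℕ) :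
    (∑ k ∈ Ico j n, (n - 1 - k)) * 2 = (n - j) * (n - j - 1) := by
  rcases Nat.eq_zero_or_pos n with rfl | hn
  · simp
  have hreflect := sum_Ico_reflect (fun k => k) j (m := n) (n := n - 1) (by omega)
  rw [hreflect, Nat.sub_add_cancel hn, Nat.sub_self, ← range_eq_Ico]
  exact sum_range_id_mul_two _

lemma sum_mul_dotProduct_eq_of_sum_smul_eq {ι κ n R : Type*} [Fintype n] [CommSemiring R]
    {s : Finset ι} {t : Finset κ} {b : ι → R} {a : κ → R} {v : ι → n → R} {u : κ → n → R}
    (h : ∑ j ∈ s, b j • v j = ∑ i ∈ t, a i • u i) (w : n → R) :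
    ∑ j ∈ s, b j * (w ⬝ᵥ v j) = ∑ i ∈ t, a i * (w ⬝ᵥ u i) := by
  simpa only [dotProduct_sum, dotProduct_smul, smul_eq_mul] using congrArg (w ⬝ᵥ ·) h

def epsD (r k : ℕ) : Fin (r + 1) → ℤ := fun m => if (m : ℕ) = k then 1 else 0

lemma epsD_eq_single {r k : ℕ} (hk : k ≤ r) : epsD r k = Pi.single ⟨k, by omega⟩ 1 := by
  funext m
  simp [epsD, Pi.single_apply, Fin.ext_iff]

lemma epsD_dotProduct {r k : ℕ} (hk : k ≤ r) (v : Fin (r + 1) → ℤ) :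
    epsD r k ⬝ᵥ v = v ⟨k, by omega⟩ := by
  rw [epsD_eq_single hk, single_dotProduct, one_mul]

lemma dotProduct_epsD {r k : ℕ} (hk : k ≤ r) (v : Fin (r + 1) → ℤ) :
    v ⬝ᵥ epsD r k = v ⟨k, by omega⟩ := by
  rw [dotProduct_comm, epsD_dotProduct hk]

lemma hatD_of_lt_sub_one {r i : ℕ} (hi : 1 ≤ i) (hir : i < r - 1) :
    hatD r i = epsD r (i - 1) - epsD r i := by
  funext m
  simp only [hatD, epsD, Pi.sub_apply]
  split_ifs <;> omega

lemma hatD_sub_one {r : ℕ} (hr : 2 ≤ r) :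
    hatD r (r - 1) = epsD r (r - 2) - epsD r (r - 1) + epsD r r := by
  funext m
  simp only [hatD, epsD, Pi.sub_apply, Pi.add_apply]
  split_ifs <;> omega

lemma hatD_self {r : ℕ} (hr : 2 ≤ r) :
    hatD r r = epsD r (r - 2) + epsD r (r - 1) - epsD r r := by
  funext m
  simp only [hatD, epsD, Pi.sub_apply, Pi.add_apply]
  split_ifs <;> omega

lemma varpiD_of_lt_sub_one {r j : ℕ} (hj : j < r - 1) :
    varpiD r j = -∑ k ∈ Ico j (r + 1), epsD r k := by
  funext m
  simp only [varpiD, epsD, Pi.neg_apply, Finset.sum_apply, sum_ite_eq, mem_Ico]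
  split_ifs <;> omega

lemma varpiD_sub_one (r : ℕ) : varpiD r (r - 1) = -epsD r (r - 1) := by
  funext m
  simp only [varpiD, epsD, Pi.neg_apply]
  split_ifs <;> omega

lemma varpiD_self (r : ℕ) : varpiD r r = -epsD r r := by
  funext m
  simp only [varpiD, epsD, Pi.neg_apply]
  split_ifs <;> omega

def heightD (r : ℕ) : Fin (r + 1) → ℤ := fun k => ((r - 1 - k : ℕ) : ℤ)

lemma heightD_dotProduct_hatD {r i : ℕ} (hr : 2 ≤ r) (hi : 1 ≤ i) (hir : i ≤ r) :
    heightD r ⬝ᵥ hatD r i = 1 := by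
  obtain hir' | rfl | rfl : i < r - 1 ∨ i = r - 1 ∨ i = r := by omega
  · rw [hatD_of_lt_sub_one hi hir', dotProduct_sub, dotProduct_epsD (by omega),
      dotProduct_epsD hir]
    simp only [heightD]
    omega
  · rw [hatD_sub_one hr, dotProduct_add, dotProduct_sub, dotProduct_epsD (by omega),
      dotProduct_epsD (by omega), dotProduct_epsD le_rfl]
    simp only [heightD]
    omega
  · rw [hatD_self hr, dotProduct_sub, dotProduct_add, dotProduct_epsD (by omega),
      dotProduct_epsD (by omega), dotProduct_epsD le_rfl]
    simp only [heightD]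
    omega

lemma two_mul_sum_Ico_pred_sub_eq {r j : ℕ} (hj : j ≤ r) :
    2 * ∑ k ∈ Ico j (r + 1), ((r - 1 - k : ℕ) : ℤ) = (r - j) * (r - j - 1) := by
  rcases hj.eq_or_lt with rfl | hj
  · simp
  have hgauss : ((∑ k ∈ Ico j r, (r - 1 - k) : ℕ) : ℤ) * 2 = ((r - j) * (r - j - 1) : ℕ) := by
    exact_mod_cast sum_Ico_pred_sub_mul_two j r
  have hcast : ((r - j - 1 : ℕ) : ℤ) = r - j - 1 := by omega
  push_cast [hj.le, hcast] at hgauss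
  rw [sum_Ico_succ_top hj.le, show r - 1 - r = 0 by omega]
  linear_combination hgauss

lemma two_mul_heightD_dotProduct_varpiD {r j : ℕ} (hj : j ≤ r) :
    2 * (heightD r ⬝ᵥ varpiD r j) = -(((r : ℤ) - j) * ((r : ℤ) - j - 1)) := by
  obtain hj' | rfl | rfl : j < r - 1 ∨ j = r - 1 ∨ j = r := by omega
  · have hterm : ∀ k ∈ Ico j (r + 1), heightD r ⬝ᵥ epsD r k = ((r - 1 - k : ℕ) : ℤ) :=
      fun k hk => dotProduct_epsD (by simp only [mem_Ico] at hk; omega) _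
    rw [varpiD_of_lt_sub_one hj', dotProduct_neg, dotProduct_sum, sum_congr rfl hterm, mul_neg,
      two_mul_sum_Ico_pred_sub_eq hj]
  · rw [varpiD_sub_one, dotProduct_neg, dotProduct_epsD (by omega)]
    rcases r with _ | r <;> simp [heightD]
  · rw [varpiD_self, dotProduct_neg, dotProduct_epsD le_rfl]
    simp [heightD]

def spinD (r : ℕ) : Fin (r + 1) → ℤ := epsD r (r - 1) + epsD r r

lemma spinD_dotProduct (r : ℕ) (v : Fin (r + 1) → ℤ) :
    spinD r ⬝ᵥ v = v ⟨r - 1, by omega⟩ + v ⟨r, by omega⟩ := by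
  rw [spinD, add_dotProduct, epsD_dotProduct (by omega), epsD_dotProduct le_rfl]

lemma spinD_dotProduct_hatD {r i : ℕ} (hi : 1 ≤ i) (hir : i ≤ r) :
    spinD r ⬝ᵥ hatD r i = 0 := by
  rw [spinD_dotProduct]
  simp only [hatD]
  split_ifs <;> omega

lemma spinD_dotProduct_varpiD {r j : ℕ} (hr : 1 ≤ r) (hj : j ≤ r) :
    spinD r ⬝ᵥ varpiD r j = if j < r - 1 then -2 else -1 := by
  rw [spinD_dotProduct]
  simp only [varpiD]
  split_ifs <;> omega

section

variable {r : ℕ} {b a : ℕ → ℤ}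

lemma two_mul_sum_eq_of_sum_smul_varpiD_eq (hr : 2 ≤ r)
    (h : ∑ j ∈ range (r + 1), b j • varpiD r j = ∑ i ∈ Icc 1 r, a i • hatD r i) :
    2 * ∑ i ∈ Icc 1 r, a i = -∑ k ∈ range (r + 1), ((r : ℤ) - k) * ((r : ℤ) - k - 1) * b k := by
  have hhat : ∀ i ∈ Icc 1 r, a i * (heightD r ⬝ᵥ hatD r i) = a i := fun i hi => by
    rw [heightD_dotProduct_hatD hr (mem_Icc.1 hi).1 (mem_Icc.1 hi).2, mul_one]
  have hvarpi : ∀ j ∈ range (r + 1), 2 * (b j * (heightD r ⬝ᵥ varpiD r j))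
      = -(((r : ℤ) - j) * ((r : ℤ) - j - 1) * b j) := fun j hj => by
    linear_combination b j * two_mul_heightD_dotProduct_varpiD (mem_range_succ_iff.1 hj)
  rw [← sum_congr rfl hhat, ← sum_mul_dotProduct_eq_of_sum_smul_eq h, mul_sum,
    sum_congr rfl hvarpi, sum_neg_distrib]

lemma two_mul_sum_add_eq_zero_of_sum_smul_varpiD_eq (hr : 1 ≤ r)
    (h : ∑ j ∈ range (r + 1), b j • varpiD r j = ∑ i ∈ Icc 1 r, a i • hatD r i) :
    2 * ∑ k ∈ range (r - 1), b k + b (r - 1) + b r = 0 := by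
  have hhat : ∀ i ∈ Icc 1 r, a i * (spinD r ⬝ᵥ hatD r i) = 0 := fun i hi => by
    rw [spinD_dotProduct_hatD (mem_Icc.1 hi).1 (mem_Icc.1 hi).2, mul_zero]
  have hvarpi : ∀ j ∈ range (r + 1), b j * (spinD r ⬝ᵥ varpiD r j)
      = -(b j * if j < r - 1 then 2 else 1) := fun j hj => by
    rw [spinD_dotProduct_varpiD hr (mem_range_succ_iff.1 hj)]
    split_ifs <;> ring
  have hpair := sum_mul_dotProduct_eq_of_sum_smul_eq h (spinD r)
  rw [sum_congr rfl hhat, sum_const_zero, sum_congr rfl hvarpi, sum_neg_distrib, neg_eq_zero,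
    show r + 1 = r - 1 + 1 + 1 by omega, sum_range_succ, sum_range_succ,
    show r - 1 + 1 = r by omega] at hpair
  have hlow : ∑ k ∈ range (r - 1), b k * (if k < r - 1 then 2 else 1)
      = 2 * ∑ k ∈ range (r - 1), b k := by
    rw [mul_sum]
    exact sum_congr rfl fun k hk => by rw [if_pos (mem_range.1 hk), mul_comm]
  rwa [hlow, if_neg (lt_irrefl _), if_neg (by omega), mul_one, mul_one] at hpair

end

lemma neg_two_mul_sum_eq_of_two_mul_sum_add_eq_zero {r : ℕ} (hr : 2 ≤ r) {b : ℕ → ℤ}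
    (hb : 2 * ∑ k ∈ range (r - 1), b k + b (r - 1) + b r = 0) :
    -(2 * ∑ k ∈ range (r + 1), ((r : ℤ) - k) * ((r : ℤ) - k - 1) * b k)
      = ∑ k ∈ Icc 1 (r - 2), 2 * (k : ℤ) * (2 * (r : ℤ) - k - 1) * b k
        + (r : ℤ) * ((r : ℤ) - 1) * (b (r - 1) + b r) := by
  have hIcc : ∑ k ∈ Icc 1 (r - 2), 2 * (k : ℤ) * (2 * (r : ℤ) - k - 1) * b k
      = ∑ k ∈ range (r - 1), 2 * (k : ℤ) * (2 * (r : ℤ) - k - 1) * b k :=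
    sum_subset (fun k hk => by simp only [mem_Icc, mem_range] at hk ⊢; omega)
      fun k hk hk' => by
        obtain rfl : k = 0 := by simp only [mem_Icc, mem_range] at hk hk'; omega
        simp
  have hpoly : ∑ k ∈ range (r - 1), 2 * (k : ℤ) * (2 * (r : ℤ) - k - 1) * b k
      = -2 * ∑ k ∈ range (r - 1), ((r : ℤ) - k) * ((r : ℤ) - k - 1) * b k
        + 2 * r * (r - 1) * ∑ k ∈ range (r - 1), b k := by
    rw [mul_sum, mul_sum, ← sum_add_distrib]
    exact sum_congr rfl fun k _ => by ring
  rw [hIcc, hpoly, show r + 1 = r - 1 + 1 + 1 by omega, sum_range_succ, sum_range_succ,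
    show r - 1 + 1 = r by omega, Nat.cast_sub (by omega : 1 ≤ r)]
  linear_combination (-(r : ℤ) * (r - 1)) * hb

theorem stmt10 (r : ℕ) (hr : 4 ≤ r) (b a : ℕ → ℤ)
    (h : ∑ j ∈ Finset.range (r + 1), b j • varpiD r j
        = ∑ i ∈ Finset.Icc 1 r, a i • hatD r i) :
    2 * (∑ i ∈ Finset.Icc 1 r, a i)
        = -∑ k ∈ Finset.range (r + 1), ((r : ℤ) - k) * ((r : ℤ) - k - 1) * b k ∧
    4 * (∑ i ∈ Finset.Icc 1 r, a i)
        = (∑ k ∈ Finset.Icc 1 (r - 2), 2 * (k : ℤ) * (2 * (r : ℤ) - k - 1) * b k)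
          + (r : ℤ) * ((r : ℤ) - 1) * (b (r - 1) + b r) := by
  have hsum := two_mul_sum_eq_of_sum_smul_varpiD_eq (by omega) h
  refine ⟨hsum, ?_⟩
  linear_combination 2 * hsum + neg_two_mul_sum_eq_of_two_mul_sum_add_eq_zero (by omega)
    (two_mul_sum_add_eq_zero_of_sum_smul_varpiD_eq (by omega) h)
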